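/- Let T be a Gibbs matrix at inverse temperature β₀ ≥ 0 for energies E and degeneracies d, let p be the Gibbs distribution at inverse temperature β ≥ 0, and q = T p with positive entries. Then (β − β₀) · ΔS ≥ 0, where ΔS = S(q) − S(p): on average, entropy flows from the hotter to the colder system. -/

import Mathlib

/-!
Write `⟨E⟩ₓ` for the mean energy and `D(x‖y) = ∑ x log (x / y)`. For the Gibbs distribution
`g_β`, `D(x‖g_β) = -S(x) + β ⟨E⟩ₓ + (∑ x) log Z_β`, so differences of relative entropies to `g_β` are
differences of free energies. Gibbs' inequality `D(q‖p) ≥ 0` with `p = g_β` then gives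
`ΔS ≤ β ΔE`, and monotonicity of `D(·‖p₀)` under the stochastic map fixing `p₀ = g_β₀` gives
`β₀ ΔE ≤ ΔS`. Together these force `(β - β₀) ΔE ≥ 0`, and a case split on the sign of
`β - β₀` turns this into `(β - β₀) ΔS ≥ 0`, using `β, β₀ ≥ 0`.
-/

open Finset Real InformationTheory

section Gibbs

variable {N : Type*} [Fintype N]

noncomputable def relEntropy (x y : N → ℝ) : ℝ := ∑ n, x n * log (x n / y n)

noncomputable def entropy (d x : N → ℝ) : ℝ := -relEntropy x d

def meanEnergy (E x : N → ℝ) : ℝ := ∑ n, x n * E n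

noncomputable def partitionFunction (d E : N → ℝ) (β : ℝ) : ℝ := ∑ k, d k * exp (-β * E k)

noncomputable def gibbs (d E : N → ℝ) (β : ℝ) (n : N) : ℝ :=
  d n * exp (-β * E n) / partitionFunction d E β

lemma sub_le_mul_log_div {x y : ℝ} (hx : 0 ≤ x) (hy : 0 < y) : x - y ≤ x * log (x / y) := by
  have h := mul_nonneg hy.le (klFun_nonneg (div_nonneg hx hy.le))
  have hkl : y * klFun (x / y) = x * log (x / y) + y - x := by
    rw [klFun_apply]
    field_simp
  linarith

lemma relEntropy_nonneg {x y : N → ℝ} (hx : ∀ n, 0 ≤ x n) (hy : ∀ n, 0 < y n)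
    (hsum : ∑ n, x n = ∑ n, y n) : 0 ≤ relEntropy x y :=
  calc 0 = ∑ n, (x n - y n) := by rw [sum_sub_distrib, hsum, sub_self]
    _ ≤ relEntropy x y := sum_le_sum fun n _ => sub_le_mul_log_div (hx n) (hy n)

lemma relEntropy_self (x : N → ℝ) : relEntropy x x = 0 := by
  refine sum_eq_zero fun n _ => ?_
  rcases eq_or_ne (x n) 0 with h | h <;> simp [h]

/-- The weighted log-sum inequality. -/
lemma mul_log_div_le_sum_mul {ι : Type*} [Fintype ι] {c x r : ι → ℝ} (hc : ∀ i, 0 ≤ c i)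
    (hx : ∀ i, 0 ≤ x i) (hr : ∀ i, 0 < r i) :
    (∑ i, c i * x i) * log ((∑ i, c i * x i) / ∑ i, c i * r i) ≤
      ∑ i, c i * (x i * log (x i / r i)) := by
  set R := ∑ i, c i * r i
  rcases (sum_nonneg fun i _ => mul_nonneg (hc i) (hr i).le : 0 ≤ R).eq_or_lt with hR | hR
  · have hc0 : ∀ i, c i = 0 := fun i =>
      (mul_eq_zero.1 ((sum_eq_zero_iff_of_nonneg fun i _ => mul_nonneg (hc i) (hr i).le).1
        hR.symm i (mem_univ i))).resolve_right (hr i).ne'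
    simp [hc0]
  replace hR : 0 < R := hR
  -- Jensen for `t ↦ t log t` at the points `x i / r i` with weights `c i * r i / R`.
  have jensen := convexOn_mul_log.map_sum_le (t := univ) (w := fun i => c i * r i / R)
    (p := fun i => x i / r i) (fun i _ => div_nonneg (mul_nonneg (hc i) (hr i).le) hR.le)
    (by rw [← sum_div, div_self hR.ne']) (fun i _ => div_nonneg (hx i) (hr i).le)
  have hmean : ∑ i, c i * r i / R * (x i / r i) = (∑ i, c i * x i) / R := by
    rw [sum_div]
    refine sum_congr rfl fun i _ => ?_
    field_simp [(hr i).ne']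
  simp only [smul_eq_mul, hmean] at jensen
  calc (∑ i, c i * x i) * log ((∑ i, c i * x i) / R)
      = (∑ i, c i * x i) / R * log ((∑ i, c i * x i) / R) * R := by
        rw [div_mul_eq_mul_div, div_mul_cancel₀ _ hR.ne']
    _ ≤ (∑ i, c i * r i / R * (x i / r i * log (x i / r i))) * R :=
        mul_le_mul_of_nonneg_right jensen hR.le
    _ = ∑ i, c i * (x i * log (x i / r i)) := by
        rw [sum_mul]
        refine sum_congr rfl fun i _ => ?_
        field_simp [(hr i).ne', hR.ne']

lemma sum_stochastic_apply {T : N → N → ℝ} (hT1 : ∀ n, ∑ m, T m n = 1) (x : N → ℝ) :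
    ∑ m, ∑ n, T m n * x n = ∑ n, x n := by
  rw [sum_comm]
  simp only [← sum_mul, hT1, one_mul]

lemma relEntropy_stochastic_le {T : N → N → ℝ} (hT0 : ∀ m n, 0 ≤ T m n)
    (hT1 : ∀ n, ∑ m, T m n = 1) {x r : N → ℝ} (hx : ∀ n, 0 ≤ x n) (hr : ∀ n, 0 < r n) :
    relEntropy (fun m => ∑ n, T m n * x n) (fun m => ∑ n, T m n * r n) ≤ relEntropy x r :=
  calc relEntropy (fun m => ∑ n, T m n * x n) (fun m => ∑ n, T m n * r n)
      ≤ ∑ m, ∑ n, T m n * (x n * log (x n / r n)) :=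
        sum_le_sum fun m _ => mul_log_div_le_sum_mul (hT0 m) hx hr
    _ = relEntropy x r := sum_stochastic_apply hT1 _

variable {d : N → ℝ} (hd : ∀ n, 0 < d n) (E : N → ℝ) (β : ℝ)
include hd

lemma gibbs_pos (n : N) : 0 < gibbs d E β n := by
  have hZ : 0 < partitionFunction d E β :=
    (mul_pos (hd n) (exp_pos _)).trans_le <|
      single_le_sum (f := fun k => d k * exp (-β * E k))
        (fun k _ => (mul_pos (hd k) (exp_pos _)).le) (mem_univ n)
  exact div_pos (mul_pos (hd n) (exp_pos _)) hZ

lemma log_gibbs_div (n : N) :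
    log (gibbs d E β n / d n) = -β * E n - log (partitionFunction d E β) := by
  have hZ : partitionFunction d E β ≠ 0 := fun h => by
    simpa [gibbs, h] using (gibbs_pos hd E β n).ne'
  rw [gibbs, div_div, mul_comm _ (d n), mul_div_mul_left _ _ (hd n).ne',
    log_div (exp_pos _).ne' hZ, log_exp]

/-- Relative entropy to the Gibbs state is a free energy. -/
lemma relEntropy_gibbs (x : N → ℝ) :
    relEntropy x (gibbs d E β) =
      -entropy d x + β * meanEnergy E x + (∑ n, x n) * log (partitionFunction d E β) := by
  have hterm : ∀ n, x n * log (x n / gibbs d E β n) =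
      x n * log (x n / d n) + β * (x n * E n) + x n * log (partitionFunction d E β) := by
    intro n
    rcases eq_or_ne (x n) 0 with h | h
    · simp [h]
    rw [← div_div_div_cancel_right₀ (hd n).ne' (x n), log_div (div_ne_zero h (hd n).ne')
      (div_pos (gibbs_pos hd E β n) (hd n)).ne', log_gibbs_div hd]
    ring
  simp only [entropy, relEntropy, meanEnergy, neg_neg, hterm, sum_add_distrib, mul_sum, sum_mul]

/-- First Clausius inequality. -/
lemma entropy_sub_entropy_gibbs_le {x : N → ℝ} (hx : ∀ n, 0 ≤ x n)
    (hsum : ∑ n, x n = ∑ n, gibbs d E β n) :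
    entropy d x - entropy d (gibbs d E β) ≤
      β * (meanEnergy E x - meanEnergy E (gibbs d E β)) := by
  have hD := relEntropy_nonneg hx (gibbs_pos hd E β) hsum
  rw [relEntropy_gibbs hd] at hD
  have hself := relEntropy_gibbs hd E β (gibbs d E β)
  rw [relEntropy_self, ← hsum] at hself
  linarith

/-- Second Clausius inequality. -/
lemma mul_meanEnergy_sub_le_entropy_sub {x y : N → ℝ} (hsum : ∑ n, x n = ∑ n, y n)
    (hD : relEntropy x (gibbs d E β) ≤ relEntropy y (gibbs d E β)) :
    β * (meanEnergy E x - meanEnergy E y) ≤ entropy d x - entropy d y := by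
  rw [relEntropy_gibbs hd, relEntropy_gibbs hd, hsum] at hD
  linarith

end Gibbs

lemma sub_mul_nonneg_of_mul_le_of_le_mul {a b e s : ℝ} (ha : 0 ≤ a) (hb : 0 ≤ b)
    (has : a * e ≤ s) (hsb : s ≤ b * e) : 0 ≤ (b - a) * s := by
  have he : 0 ≤ (b - a) * e := by linarith
  rcases le_total a b with hab | hba
  · calc 0 ≤ a * ((b - a) * e) := mul_nonneg ha he
      _ = (b - a) * (a * e) := by ring
      _ ≤ (b - a) * s := mul_le_mul_of_nonneg_left has (sub_nonneg.2 hab)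
  · calc 0 ≤ b * ((b - a) * e) := mul_nonneg hb he
      _ = (b - a) * (b * e) := by ring
      _ ≤ (b - a) * s := mul_le_mul_of_nonpos_left hsb (sub_nonpos.2 hba)

theorem entropy_flow_direction_general {N : Type*} [Fintype N]
    (E : N → ℝ) (d : N → ℕ) (hd : ∀ n, 0 < d n) (β₀ β : ℝ)
    (hβ₀ : 0 ≤ β₀) (hβ : 0 ≤ β)
    (T : N → N → ℝ) (hT0 : ∀ m n, 0 ≤ T m n) (hT1 : ∀ n, ∑ m, T m n = 1)
    (p0 p q : N → ℝ)
    (hp0 : ∀ n, p0 n = (d n : ℝ) * Real.exp (-β₀ * E n) /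
      (∑ k, (d k : ℝ) * Real.exp (-β₀ * E k)))
    (hfix : ∀ m, ∑ n, T m n * p0 n = p0 m)
    (hp : ∀ n, p n = (d n : ℝ) * Real.exp (-β * E n) /
      (∑ k, (d k : ℝ) * Real.exp (-β * E k)))
    (hq : ∀ m, q m = ∑ n, T m n * p n) :
    0 ≤ (β - β₀) *
      ((-(∑ n, q n * Real.log (q n / (d n : ℝ)))) -
       (-(∑ n, p n * Real.log (p n / (d n : ℝ))))) := by
  have hd' : ∀ n, (0 : ℝ) < d n := fun n => Nat.cast_pos.2 (hd n)
  obtain rfl : p = gibbs (fun n => (d n : ℝ)) E β := funext hp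
  obtain rfl : p0 = gibbs (fun n => (d n : ℝ)) E β₀ := funext hp0
  obtain rfl : q = fun m => ∑ n, T m n * gibbs (fun n => (d n : ℝ)) E β n := funext hq
  have hpos := gibbs_pos hd' E β
  have hq0 : ∀ m, 0 ≤ ∑ n, T m n * gibbs (fun n => (d n : ℝ)) E β n :=
    fun m => sum_nonneg fun n _ => mul_nonneg (hT0 m n) (hpos n).le
  have hsum := sum_stochastic_apply hT1 (gibbs (fun n => (d n : ℝ)) E β)
  have clausius₁ := entropy_sub_entropy_gibbs_le hd' E β hq0 hsum
  have hdecay := relEntropy_stochastic_le hT0 hT1 (fun n => (hpos n).le) (gibbs_pos hd' E β₀)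
  rw [show (fun m => ∑ n, T m n * gibbs _ E β₀ n) = gibbs _ E β₀ from funext hfix] at hdecay
  have clausius₂ := mul_meanEnergy_sub_le_entropy_sub hd' E β₀ hsum hdecay
  exact sub_mul_nonneg_of_mul_le_of_le_mul hβ₀ hβ clausius₂ clausius₁

/-- Entropy flows on average from the hotter to the colder system. -/
theorem entropy_flow_direction {N : Type*} [Fintype N] [Nonempty N]
    (E : N → ℝ) (d : N → ℕ) (hd : ∀ n, 0 < d n) (β₀ β : ℝ)
    (hβ₀ : 0 ≤ β₀) (hβ : 0 ≤ β)
    (T : N → N → ℝ) (hT0 : ∀ m n, 0 ≤ T m n) (hT1 : ∀ n, ∑ m, T m n = 1)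
    (p0 p q : N → ℝ)
    (hp0 : ∀ n, p0 n = (d n : ℝ) * Real.exp (-β₀ * E n) /
      (∑ k, (d k : ℝ) * Real.exp (-β₀ * E k)))
    (hfix : ∀ m, ∑ n, T m n * p0 n = p0 m)
    (hp : ∀ n, p n = (d n : ℝ) * Real.exp (-β * E n) /
      (∑ k, (d k : ℝ) * Real.exp (-β * E k)))
    (hq : ∀ m, q m = ∑ n, T m n * p n) (hqpos : ∀ m, 0 < q m) :
    0 ≤ (β - β₀) *
      ((-(∑ n, q n * Real.log (q n / (d n : ℝ)))) -
       (-(∑ n, p n * Real.log (p n / (d n : ℝ))))) :=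
  entropy_flow_direction_general E d hd β₀ β hβ₀ hβ T hT0 hT1 p0 p q hp0 hfix hp hq
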